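/- Let φ: ℤ_q^m → ℤ_h be a map, where h is a prime dividing q. The following are equivalent: (1) φ is a GPhA(q^m) of type 1 = (1,…,1); (2) the expansion φ': ℤ_{hq}^m → ℤ_h of φ of type 1 satisfies |Σ_{x ∈ ℤ_{hq}^m} ζ_h^{φ'(x)} ζ_{hq}^{−v·x}|² = (h²q)^m if v ∈ F and = 0 if v ∈ ℤ_{hq}^m ∖ F, where F = {v ∈ ℤ_{hq}^m : v ≡ (1,…,1) mod h}. -/

import Mathlib

open scoped BigOperators

noncomputable section

/-- `zeta k` is the complex `k`-th root of unity `exp(2π√-1/k)`. -/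
def zeta (k : ℕ) : ℂ := Complex.exp (2 * Real.pi * Complex.I / k)

/-- Periodic autocorrelation of a map `f : A → ℤ_h` at shift `w`. -/
def AC {A : Type*} [AddCommGroup A] [Fintype A] (h : ℕ) (f : A → ZMod h) (w : A) : ℂ :=
  ∑ g : A, zeta h ^ (f g - f (g + w)).val

/-- The expansion `φ' : ℤ_{hq}^m → ℤ_h` of type `1 = (1,…,1)` of `φ : ℤ_q^m → ℤ_h`:
`φ'(g) = φ(g mod q) + Σ_i ⌊g_i/q⌋ (mod h)`. -/
def expandOne (q m h : ℕ) (φ : (Fin m → ZMod q) → ZMod h)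
    (g : Fin m → ZMod (h * q)) : ZMod h :=
  φ (fun i => ((g i).val : ZMod q)) + ((∑ i, (g i).val / q : ℕ) : ZMod h)

/-- `L = {(y_1 q, …, y_m q) : 0 ≤ y_i < h} ⊆ ℤ_{hq}^m`. -/
def LOne (q m h : ℕ) : Set (Fin m → ZMod (h * q)) :=
  {g | ∀ i, q ∣ (g i).val}

/-- The "Walsh" sum `Σ_{x ∈ ℤ_{hq}^m} ζ_h^{φ'(x)} ζ_{hq}^{-v·x}`. -/
def WS (q m h : ℕ) [NeZero (h * q)] (f : (Fin m → ZMod (h * q)) → ZMod h)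
    (v : Fin m → ZMod (h * q)) : ℂ :=
  ∑ x : Fin m → ZMod (h * q),
    zeta h ^ (f x).val * zeta (h * q) ^ (-(∑ i, (v i).val * (x i).val : ℤ))

/-!
The squared modulus of the Walsh sum of `φ'` is the Fourier transform on `ℤ_{hq}^m` of its
autocorrelation (Wiener–Khinchin), and this Fourier transform is injective. On
`L = {(q c_1, …, q c_m)}` the autocorrelation of an expansion of type `1` is the same for every
`φ`, namely `AC_{φ'}(q c) = (hq)^m ζ_h^{-Σ c_i}`, because shifting by `q c` only adds `Σ c_i` to
`φ'`; and the transform of this restriction of `AC_{φ'}` to `L` is exactly the plateaued profile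
`(h²q)^m · [v ≡ 1 mod h]`. So `φ'` is plateaued iff its autocorrelation agrees with its
restriction to `L`, i.e. vanishes off `L`.
-/

open Finset ZMod

lemma AddChar.map_sum_eq_prod {A M ι : Type*} [AddCommMonoid A] [CommMonoid M]
    (ψ : AddChar A M) (s : Finset ι) (f : ι → A) : ψ (∑ i ∈ s, f i) = ∏ i ∈ s, ψ (f i) := by
  classical
  induction s using Finset.induction_on with
  | empty => simp
  | insert a s ha ih => rw [sum_insert ha, prod_insert ha, AddChar.map_add_eq_mul, ih]

lemma sq_norm_sum_mul_addChar {G : Type*} [AddCommGroup G] [Fintype G] (F : G → ℂ)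
    (ψ : AddChar G ℂ) :
    (‖∑ x, F x * ψ x‖ : ℂ) ^ 2
      = ∑ w, (∑ x, F x * (starRingEnd ℂ) (F (x + w))) * ψ (-w) := by
  calc (‖∑ x, F x * ψ x‖ : ℂ) ^ 2
      = ∑ x, ∑ y, F x * ψ x * (starRingEnd ℂ) (F y * ψ y) := by
        rw [← Complex.mul_conj', map_sum, sum_mul_sum]
    _ = ∑ x, ∑ w, F x * (starRingEnd ℂ) (F (x + w)) * ψ (-w) := by
        refine sum_congr rfl fun x _ => (Fintype.sum_equiv (Equiv.addLeft x) _ _ fun w => ?_).symm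
        have hψ : ψ x * ψ (-x) = 1 := by
          rw [← AddChar.map_add_eq_mul, add_neg_cancel, AddChar.map_zero_eq_one]
        simp only [Equiv.coe_addLeft, map_mul, ← AddChar.map_neg_eq_conj,
          AddChar.map_add_eq_mul]
        linear_combination -(F x * (starRingEnd ℂ) (F (x + w)) * ψ (-w)) * hψ
    _ = ∑ w, (∑ x, F x * (starRingEnd ℂ) (F (x + w))) * ψ (-w) := by
        rw [sum_comm]
        simp only [sum_mul]

section Character

variable {n : ℕ} [NeZero n]

lemma zeta_zpow (a : ℤ) : zeta n ^ a = stdAddChar (a : ZMod n) := by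
  rw [stdAddChar_coe, zeta, ← Complex.exp_int_mul]
  ring_nf

lemma zeta_pow (a : ℕ) : zeta n ^ a = stdAddChar (a : ZMod n) := by
  simpa using zeta_zpow (n := n) a

variable {m : ℕ}

def dotChar (v : Fin m → ZMod n) : AddChar (Fin m → ZMod n) ℂ where
  toFun x := stdAddChar (v ⬝ᵥ x)
  map_zero_eq_one' := by simp
  map_add_eq_mul' x y := by simp [dotProduct_add, AddChar.map_add_eq_mul]

lemma dotChar_apply (v x : Fin m → ZMod n) : dotChar v x = stdAddChar (v ⬝ᵥ x) := rfl

lemma sum_dotChar_apply (u : Fin m → ZMod n) :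
    ∑ v, dotChar v u = if u = 0 then (n : ℂ) ^ m else 0 := by
  classical
  simp only [dotChar_apply, dotProduct, AddChar.map_sum_eq_prod]
  rw [← Fintype.prod_sum (fun i t => stdAddChar (t * u i))]
  simp only [AddChar.sum_mulShift _ (isPrimitive_stdAddChar n), ZMod.card, Nat.cast_ite,
    Nat.cast_zero, prod_ite_zero, mem_univ, true_implies, prod_const, card_univ, Fintype.card_fin,
    funext_iff, Pi.zero_apply]

def dotFourier (a : (Fin m → ZMod n) → ℂ) (v : Fin m → ZMod n) : ℂ :=
  ∑ w, a w * dotChar v w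

lemma sum_dotFourier_mul_dotChar_neg (a : (Fin m → ZMod n) → ℂ) (u : Fin m → ZMod n) :
    ∑ v, dotFourier a v * dotChar v (-u) = (n : ℂ) ^ m * a u := by
  classical
  calc ∑ v, dotFourier a v * dotChar v (-u)
      = ∑ w, a w * ∑ v, dotChar v (w - u) := by
        simp only [dotFourier, sum_mul, mul_sum, sub_eq_add_neg, AddChar.map_add_eq_mul,
          mul_assoc]
        exact sum_comm
    _ = (n : ℂ) ^ m * a u := by
        simp only [sum_dotChar_apply, sub_eq_zero, mul_ite, mul_zero, sum_ite_eq', mem_univ,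
          if_true, mul_comm]

lemma dotFourier_injective : Function.Injective (dotFourier (n := n) (m := m)) := by
  intro a b hab
  funext u
  have h := sum_dotFourier_mul_dotChar_neg a u
  rw [hab, sum_dotFourier_mul_dotChar_neg] at h
  exact mul_left_cancel₀ (pow_ne_zero _ (Nat.cast_ne_zero.mpr (NeZero.ne n))) h.symm

end Character

lemma AC_eq_sum_stdAddChar {A : Type*} [AddCommGroup A] [Fintype A] {h : ℕ} [NeZero h]
    (f : A → ZMod h) (w : A) : AC h f w = ∑ g, stdAddChar (f g - f (g + w)) := by
  simp only [AC, zeta_pow, natCast_zmod_val]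

def mulEmbed (q : ℕ) {h : ℕ} (c : ZMod h) : ZMod (h * q) := ((c.val * q : ℕ) : ZMod (h * q))

section Expansion

variable {q h m : ℕ} [NeZero q] [NeZero h]

lemma WS_eq_sum_mul_dotChar (f : (Fin m → ZMod (h * q)) → ZMod h) (v : Fin m → ZMod (h * q)) :
    WS q m h f v = ∑ x, stdAddChar (f x) * dotChar (-v) x := by
  refine sum_congr rfl fun x _ => ?_
  rw [zeta_pow, natCast_zmod_val, zeta_zpow, dotChar_apply, neg_dotProduct]
  push_cast [natCast_zmod_val, dotProduct]
  rfl

lemma sq_norm_WS_eq_dotFourier_AC (f : (Fin m → ZMod (h * q)) → ZMod h)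
    (v : Fin m → ZMod (h * q)) :
    (‖WS q m h f v‖ : ℂ) ^ 2 = dotFourier (AC h f) v := by
  rw [WS_eq_sum_mul_dotChar, sq_norm_sum_mul_addChar, dotFourier]
  refine sum_congr rfl fun w _ => ?_
  rw [AC_eq_sum_stdAddChar, dotChar_apply, dotChar_apply, neg_dotProduct, dotProduct_neg, neg_neg]
  congr 1
  refine sum_congr rfl fun x _ => ?_
  rw [← AddChar.map_neg_eq_conj, ← AddChar.map_add_eq_mul, sub_eq_add_neg]

lemma val_mulEmbed (c : ZMod h) : (mulEmbed q c).val = c.val * q :=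
  ZMod.val_natCast_of_lt (Nat.mul_lt_mul_of_pos_right c.val_lt (Nat.pos_of_neZero q))

lemma mulEmbed_injective : Function.Injective (mulEmbed (h := h) q) := by
  intro c d hcd
  have := congrArg ZMod.val hcd
  rw [val_mulEmbed, val_mulEmbed] at this
  exact ZMod.val_injective h (Nat.eq_of_mul_eq_mul_right (Nat.pos_of_neZero q) this)

lemma LOne_eq_range :
    LOne q m h = Set.range fun (c : Fin m → ZMod h) i => mulEmbed q (c i) := by
  ext w
  constructor
  · intro hw
    refine ⟨fun i => ((w i).val / q : ℕ), funext fun i => ?_⟩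
    have hlt : (w i).val / q < h := Nat.div_lt_of_lt_mul ((w i).val_lt.trans_eq (mul_comm h q))
    dsimp only [mulEmbed]
    rw [ZMod.val_natCast_of_lt hlt, Nat.div_mul_cancel (hw i), natCast_zmod_val]
  · rintro ⟨c, rfl⟩ i
    rw [val_mulEmbed]
    exact dvd_mul_left q _

lemma sum_indicator_LOne (F : (Fin m → ZMod (h * q)) → ℂ) :
    ∑ w, (LOne q m h).indicator F w = ∑ c : Fin m → ZMod h, F fun i => mulEmbed q (c i) := by
  have hinj : Function.Injective fun (c : Fin m → ZMod h) i => mulEmbed q (c i) :=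
    fun c d hcd => funext fun i => mulEmbed_injective (congrFun hcd i)
  rw [LOne_eq_range]
  exact (Fintype.sum_of_injective _ hinj _ _ (fun w hw => Set.indicator_of_notMem hw _)
    fun c => (Set.indicator_of_mem (Set.mem_range_self c) _).symm).symm

lemma natCast_val_add_mulEmbed (t : ZMod (h * q)) (c : ZMod h) :
    (((t + mulEmbed q c).val : ℕ) : ZMod q) = (t.val : ZMod q) := by
  rw [ZMod.val_add, val_mulEmbed, ZMod.natCast_eq_natCast_iff',
    Nat.mod_mod_of_dvd _ (dvd_mul_left q h), Nat.add_mul_mod_self_right]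

lemma natCast_val_add_mulEmbed_div (t : ZMod (h * q)) (c : ZMod h) :
    (((t + mulEmbed q c).val / q : ℕ) : ZMod h) = ((t.val / q : ℕ) : ZMod h) + c := by
  rw [ZMod.val_add, val_mulEmbed, Nat.mod_mul_left_div_self,
    Nat.add_mul_div_right _ _ (Nat.pos_of_neZero q), ZMod.natCast_mod, Nat.cast_add,
    natCast_zmod_val]

lemma expandOne_add_mulEmbed (φ : (Fin m → ZMod q) → ZMod h) (g : Fin m → ZMod (h * q))
    (c : Fin m → ZMod h) :
    expandOne q m h φ (g + fun i => mulEmbed q (c i)) = expandOne q m h φ g + ∑ i, c i := by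
  simp only [expandOne, Pi.add_apply, natCast_val_add_mulEmbed, Nat.cast_sum,
    natCast_val_add_mulEmbed_div, sum_add_distrib]
  ring

lemma AC_expandOne_mulEmbed (φ : (Fin m → ZMod q) → ZMod h) (c : Fin m → ZMod h) :
    AC h (expandOne q m h φ) (fun i => mulEmbed q (c i))
      = ((h * q : ℕ) : ℂ) ^ m * stdAddChar (-∑ i, c i) := by
  simp only [AC_eq_sum_stdAddChar, expandOne_add_mulEmbed, sub_add_cancel_left, sum_const,
    card_univ, Fintype.card_fun, ZMod.card, Fintype.card_fin, nsmul_eq_mul, Nat.cast_pow]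

lemma stdAddChar_natCast_mul (N : ℕ) :
    stdAddChar ((N * q : ℕ) : ZMod (h * q)) = stdAddChar ((N : ℕ) : ZMod h) := by
  rw [← Int.cast_natCast, ← Int.cast_natCast (R := ZMod h), stdAddChar_coe, stdAddChar_coe]
  have : (q : ℂ) ≠ 0 := Nat.cast_ne_zero.mpr (NeZero.ne q)
  push_cast
  field_simp

lemma dotChar_mulEmbed (v : Fin m → ZMod (h * q)) (c : Fin m → ZMod h) :
    dotChar v (fun i => mulEmbed q (c i)) = dotChar (fun i => ((v i).val : ZMod h)) c := by
  have hv : v ⬝ᵥ (fun i => mulEmbed q (c i))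
      = ((∑ i, (v i).val * (c i).val * q : ℕ) : ZMod (h * q)) := by
    simp [dotProduct, mulEmbed, mul_assoc]
  have hc : (fun i => ((v i).val : ZMod h)) ⬝ᵥ c
      = ((∑ i, (v i).val * (c i).val : ℕ) : ZMod h) := by
    simp [dotProduct]
  rw [dotChar_apply, dotChar_apply, hv, hc, ← sum_mul, stdAddChar_natCast_mul]

lemma dotFourier_indicator_AC_expandOne (φ : (Fin m → ZMod q) → ZMod h)
    (v : Fin m → ZMod (h * q)) :
    dotFourier ((LOne q m h).indicator (AC h (expandOne q m h φ))) v
      = if ∀ i, (((v i).val : ℕ) : ZMod h) = 1 then ((h ^ 2 * q : ℕ) : ℂ) ^ m else 0 := by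
  set u : Fin m → ZMod h := fun i => ((v i).val : ZMod h) - 1
  calc dotFourier ((LOne q m h).indicator (AC h (expandOne q m h φ))) v
      = ∑ c : Fin m → ZMod h, AC h (expandOne q m h φ) (fun i => mulEmbed q (c i))
          * dotChar v (fun i => mulEmbed q (c i)) := by
        simp only [dotFourier, ← Set.indicator_mul_left, sum_indicator_LOne]
    _ = ∑ c, ((h * q : ℕ) : ℂ) ^ m * dotChar c u := by
        refine sum_congr rfl fun c _ => ?_
        have hexp : -∑ i, c i + (fun i => ((v i).val : ZMod h)) ⬝ᵥ c = c ⬝ᵥ u := by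
          rw [dotProduct_comm c u]
          simp only [dotProduct, u, sub_mul, one_mul, sum_sub_distrib]
          ring
        rw [AC_expandOne_mulEmbed, dotChar_mulEmbed, mul_assoc, dotChar_apply, dotChar_apply,
          ← AddChar.map_add_eq_mul, hexp]
    _ = if ∀ i, (((v i).val : ℕ) : ZMod h) = 1 then ((h ^ 2 * q : ℕ) : ℂ) ^ m else 0 := by
        simp only [← mul_sum, sum_dotChar_apply, funext_iff, u, Pi.zero_apply, sub_eq_zero]
        split_ifs
        · push_cast
          ring
        · rw [mul_zero]

end Expansion

theorem GPhA_iff_plateaued_general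
    (q m h : ℕ) [NeZero (h * q)]
    (φ : (Fin m → ZMod q) → ZMod h) :
    (∀ g : Fin m → ZMod (h * q), g ∉ LOne q m h → AC h (expandOne q m h φ) g = 0)
      ↔ ∀ v : Fin m → ZMod (h * q),
          ((∀ i, (((v i).val : ℕ) : ZMod h) = 1) →
            ‖WS q m h (expandOne q m h φ) v‖ ^ 2 = ((h ^ 2 * q : ℕ) : ℝ) ^ m)
          ∧ ((¬ ∀ i, (((v i).val : ℕ) : ZMod h) = 1) →
            ‖WS q m h (expandOne q m h φ) v‖ ^ 2 = 0) := by
  have : NeZero q := ⟨right_ne_zero_of_mul (NeZero.ne (h * q))⟩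
  have : NeZero h := ⟨left_ne_zero_of_mul (NeZero.ne (h * q))⟩
  rw [← Function.support_subset_iff', ← Set.indicator_eq_self, eq_comm,
    ← dotFourier_injective.eq_iff, funext_iff]
  refine forall_congr' fun v => ?_
  rw [← sq_norm_WS_eq_dotFourier_AC, dotFourier_indicator_AC_expandOne]
  split_ifs with hv
  · simp only [hv, implies_true, not_true_eq_false, true_implies, false_implies, and_true]
    norm_cast
  · simp only [hv, not_false_eq_true, true_implies, false_implies, true_and]
    norm_cast

/-- for `h` a prime dividing `q` and `φ : ℤ_q^m → ℤ_h`, the following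
are equivalent: (1) `φ` is a `GPhA(q^m)` of type `1`; (2) the expansion
`φ' : ℤ_{hq}^m → ℤ_h` of `φ` of type `1` is a generalized plateaued function:
`|Σ_x ζ_h^{φ'(x)} ζ_{hq}^{-v·x}|² = (h²q)^m` if `v ∈ F` and `= 0` otherwise,
where `F = {v : v ≡ (1,…,1) (mod h)}`. -/
theorem GPhA_iff_plateaued
    (q m h : ℕ) [NeZero q] [NeZero (h * q)] [NeZero h]
    (hq : 2 ≤ q) (hp : Nat.Prime h) (hdvd : h ∣ q)
    (φ : (Fin m → ZMod q) → ZMod h) :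
    (∀ g : Fin m → ZMod (h * q), g ∉ LOne q m h → AC h (expandOne q m h φ) g = 0)
      ↔ ∀ v : Fin m → ZMod (h * q),
          ((∀ i, (((v i).val : ℕ) : ZMod h) = 1) →
            ‖WS q m h (expandOne q m h φ) v‖ ^ 2 = ((h ^ 2 * q : ℕ) : ℝ) ^ m)
          ∧ ((¬ ∀ i, (((v i).val : ℕ) : ZMod h) = 1) →
            ‖WS q m h (expandOne q m h φ) v‖ ^ 2 = 0) :=
  GPhA_iff_plateaued_general q m h φ
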